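/- arXiv:math/9701215 — 3 statements merged into one kernel-verified Lean document; each statement's English description precedes it below -/
import Mathlib

section
/- If Λ ⊂ ℝⁿ is a tile by ℤⁿ (a compact set of positive Lebesgue measure whose ℤⁿ-translates cover ℝⁿ with overlaps of measure zero) such that every neighborhood of every point of Λ meets Λ in positive Lebesgue measure, then the boundary of Λ equals the set Λ^(2) = { x ∈ Λ : (x + (ℤⁿ \ {0})) ∩ Λ ≠ ∅ }. -/
/-! A boundary point of `Λ` is a limit of points outside `Λ`, each lying in a translate `Λ + z`
with `z ≠ 0`. Only finitely many translates of the bounded set `Λ` meet a given ball, so the union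
of these translates is closed and the point lies in one of them. Conversely, if `x` and `x + z`
lie in `Λ` with `z ≠ 0` and `x` were interior, a small ball around `x + z` would meet `Λ` only
inside the null set `Λ ∩ (Λ + z)`, contradicting the positive local measure of `Λ` at `x + z`. -/

open Metric Set MeasureTheory

noncomputable section

/-- The real vector associated to an integer vector. -/
def vecReal {n : ℕ} (v : Fin n → ℤ) : Fin n → ℝ := fun i => (v i : ℝ)

/-- `Λ` is a tile by the lattice `ℤⁿ`: a compact set of positive Lebesgue measure
whose `ℤⁿ`-translates cover `ℝⁿ` and overlap in measure zero. -/
def IsTileByZn {n : ℕ} (Λ : Set (Fin n → ℝ)) : Prop :=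
  IsCompact Λ ∧ 0 < volume Λ ∧
    (⋃ z : Fin n → ℤ, (fun x => x + vecReal z) '' Λ) = Set.univ ∧
    ∀ z : Fin n → ℤ, z ≠ 0 → volume (Λ ∩ ((fun x => x + vecReal z) '' Λ)) = 0

@[simp]
lemma vecReal_zero {n : ℕ} : vecReal (0 : Fin n → ℤ) = 0 := by
  funext i; simp [vecReal]

@[simp]
lemma vecReal_neg {n : ℕ} (z : Fin n → ℤ) : vecReal (-z) = -vecReal z := by
  funext i; simp [vecReal]

lemma isometry_vecReal (n : ℕ) : Isometry (vecReal : (Fin n → ℤ) → Fin n → ℝ) :=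
  Isometry.piMap (fun _ => ((↑) : ℤ → ℝ)) fun _ => Real.isometry_intCast

lemma finite_preimage_vecReal {n : ℕ} {s : Set (Fin n → ℝ)} (hs : Bornology.IsBounded s) :
    (vecReal ⁻¹' s).Finite := by
  simpa using Metric.finite_isBounded_inter_isClosed DiscreteTopology.isDiscrete
    ((isometry_vecReal n).antilipschitz.isBounded_preimage hs) isClosed_univ

section Translates

variable {E : Type*} [SeminormedAddCommGroup E]

lemma locallyFinite_image_add_right {ι : Type*} {v : ι → E}
    (hv : ∀ s : Set E, Bornology.IsBounded s → (v ⁻¹' s).Finite) {K : Set E}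
    (hK : Bornology.IsBounded K) : LocallyFinite fun i => (· + v i) '' K := by
  intro x
  refine ⟨ball x 1, ball_mem_nhds x one_pos,
    (hv _ ((isBounded_ball (x := x) (r := 1)).sub hK)).subset ?_⟩
  rintro i ⟨_, ⟨k, hk, rfl⟩, hki⟩
  exact ⟨k + v i, hki, k, hk, add_sub_cancel_left k (v i)⟩

lemma notMem_interior_of_measure_inter_image_add_right [MeasurableSpace E] (μ : Measure E)
    {K : Set E} {x v : E} (hnull : μ (K ∩ (· + v) '' K) = 0)
    (hloc : ∀ ε : ℝ, 0 < ε → 0 < μ (ball (x + v) ε ∩ K)) : x ∉ interior K := by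
  intro hx
  obtain ⟨ε, hε, hball⟩ := Metric.isOpen_iff.1 isOpen_interior x hx
  have hsub : ball (x + v) ε ∩ K ⊆ K ∩ (· + v) '' K := by
    rintro y ⟨hy, hyK⟩
    refine ⟨hyK, y - v, interior_subset (hball ?_), sub_add_cancel y v⟩
    rwa [mem_ball, dist_sub_eq_dist_add_left]
  exact (hloc ε hε).ne' (measure_mono_null hsub hnull)

end Translates

lemma frontier_subset_iUnion_of_locallyFinite {X ι : Type*} [TopologicalSpace X] {K : Set X}
    {A : ι → Set X} (hA : LocallyFinite A) (hAc : ∀ i, IsClosed (A i)) (hcov : Kᶜ ⊆ ⋃ i, A i) :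
    frontier K ⊆ ⋃ i, A i :=
  calc frontier K = frontier Kᶜ := (frontier_compl K).symm
    _ ⊆ closure Kᶜ := frontier_subset_closure
    _ ⊆ ⋃ i, A i := closure_minimal hcov (hA.isClosed_iUnion hAc)

section Tile

variable {n : ℕ} {Λ : Set (Fin n → ℝ)}

lemma frontier_subset_of_isTileByZn (hT : IsTileByZn Λ) :
    frontier Λ ⊆ {x ∈ Λ | ∃ z : Fin n → ℤ, z ≠ 0 ∧ x + vecReal z ∈ Λ} := by
  obtain ⟨hcomp, -, hcover, -⟩ := hT
  let A : {z : Fin n → ℤ // z ≠ 0} → Set (Fin n → ℝ) := fun z => (· + vecReal z.1) '' Λ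
  have hA : LocallyFinite A :=
    (locallyFinite_image_add_right (fun _ => finite_preimage_vecReal)
      hcomp.isBounded).comp_injective Subtype.val_injective
  have hAc (z) : IsClosed (A z) := (hcomp.image (continuous_add_const _)).isClosed
  have hcov : Λᶜ ⊆ ⋃ z, A z := by
    intro y hy
    obtain ⟨z, hz⟩ := mem_iUnion.1 (hcover.symm ▸ mem_univ y)
    have hz0 : z ≠ 0 := by
      rintro rfl
      exact hy (by simpa using hz)
    exact mem_iUnion.2 ⟨⟨z, hz0⟩, hz⟩
  intro x hx
  obtain ⟨⟨z, hz⟩, a, ha, rfl⟩ :=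
    mem_iUnion.1 (frontier_subset_iUnion_of_locallyFinite hA hAc hcov hx)
  refine ⟨hcomp.isClosed.frontier_subset hx, -z, neg_ne_zero.2 hz, ?_⟩
  simpa using ha

lemma subset_frontier_of_isTileByZn (hT : IsTileByZn Λ)
    (hloc : ∀ x ∈ Λ, ∀ ε : ℝ, 0 < ε → 0 < volume (ball x ε ∩ Λ)) :
    {x ∈ Λ | ∃ z : Fin n → ℤ, z ≠ 0 ∧ x + vecReal z ∈ Λ} ⊆ frontier Λ := by
  rintro x ⟨hx, z, hz, hxz⟩
  exact ⟨subset_closure hx,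
    notMem_interior_of_measure_inter_image_add_right volume (hT.2.2.2 z hz) (hloc _ hxz)⟩

end Tile

/-- for a tile by `ℤⁿ` each of whose points has all its neighborhoods
meeting the tile in positive measure, the boundary equals
`Λ^(2) = { x ∈ Λ : (x + (ℤⁿ \ {0})) ∩ Λ ≠ ∅ }`. -/
theorem stmt4 (n : ℕ) (Λ : Set (Fin n → ℝ)) (hT : IsTileByZn Λ)
    (hloc : ∀ x ∈ Λ, ∀ ε : ℝ, 0 < ε → 0 < volume (Metric.ball x ε ∩ Λ)) :
    frontier Λ = {x ∈ Λ | ∃ z : Fin n → ℤ, z ≠ 0 ∧ x + vecReal z ∈ Λ} :=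
  (frontier_subset_of_isTileByZn hT).antisymm (subset_frontier_of_isTileByZn hT hloc)
end
end

section
/- Let A be an expanding linear isomorphism of ℝⁿ and Q ⊂ ℝⁿ finite, and let a_−⁻¹ be the spectral radius of A⁻¹. Then the Hausdorff dimension of the attractor Λ(A,Q) is at most ln(card Q)/ln(a_−). -/
open Metric Set MeasureTheory
open scoped Pointwise

noncomputable section

/-- All complex eigenvalues of the real matrix `M` have modulus greater than `1`. -/
def IsExpandingMatrix {n : ℕ} (M : Matrix (Fin n) (Fin n) ℝ) : Prop :=
  ∀ z ∈ (M.charpoly.map (algebraMap ℝ ℂ)).roots, 1 < ‖z‖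

/-- `(M,R)` is a standard pair. -/
def IsStandardPair {n : ℕ} (M : Matrix (Fin n) (Fin n) ℤ) (R : Finset (Fin n → ℤ)) : Prop :=
  IsExpandingMatrix (M.map (Int.cast : ℤ → ℝ)) ∧ (0 : Fin n → ℤ) ∈ R ∧
    ∀ v : Fin n → ℤ, ∃! r, r ∈ R ∧ ∃ z : Fin n → ℤ, v = M.mulVec z + r

/-- The iterated function system map `τ(A) = ⋃_{r ∈ R} M⁻¹ (A + r)`. -/
def tauIFS {n : ℕ} (M : Matrix (Fin n) (Fin n) ℝ) (R : Set (Fin n → ℝ))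
    (A : Set (Fin n → ℝ)) : Set (Fin n → ℝ) :=
  ⋃ r ∈ R, (fun a => M⁻¹.mulVec (a + r)) '' A

/-!
Iterating `Λ = ⋃_{q ∈ Q} A⁻¹(Λ + q)` `k` times covers `Λ` by `(card Q)^k` translates of
`A^{-k} Λ`. By Gelfand's formula the spectral radius `a⁻¹` of `A⁻¹` controls `‖A^{-k}‖`: for every
`r > a⁻¹` these pieces have diameter `O(r^k)`. Hence `μH[d] Λ = 0` as soon as `card Q · r^d < 1`,
i.e. `dimH Λ ≤ log (card Q) / (-log r)`, and letting `r ↓ a⁻¹` gives the bound.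
-/

open Filter Matrix
open scoped NNReal ENNReal Topology

section HausdorffDimension

variable {X : Type*} [EMetricSpace X] [MeasurableSpace X] [BorelSpace X]
  {ι : ℕ → Type*} [∀ k, Fintype (ι k)] {s : Set X} {t : ∀ k, ι k → Set X} {N : ℕ}

theorem hausdorffMeasure_eq_zero_of_geometric_cover {C r : ℝ≥0∞} {d : ℝ} (hC : C ≠ ∞)
    (hr : r < 1) (hd : 0 ≤ d) (hNr : N * r ^ d < 1) (hcard : ∀ k, Fintype.card (ι k) ≤ N ^ k)
    (hcover : ∀ k, s ⊆ ⋃ i, t k i) (hdiam : ∀ k i, ediam (t k i) ≤ C * r ^ k) :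
    μH[d] s = 0 := by
  have hsum : ∀ k, ∑ i, ediam (t k i) ^ d ≤ C ^ d * (N * r ^ d) ^ k := fun k =>
    calc ∑ i, ediam (t k i) ^ d
        ≤ ∑ _i : ι k, (C * r ^ k) ^ d :=
          Finset.sum_le_sum fun i _ => ENNReal.rpow_le_rpow (hdiam k i) hd
      _ = Fintype.card (ι k) * (C ^ d * (r ^ d) ^ k) := by
          rw [Finset.sum_const, Finset.card_univ, nsmul_eq_mul, ENNReal.mul_rpow_of_nonneg _ _ hd,
            ← ENNReal.rpow_natCast, ← ENNReal.rpow_mul, mul_comm (k : ℝ), ENNReal.rpow_mul,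
            ENNReal.rpow_natCast]
      _ ≤ N ^ k * (C ^ d * (r ^ d) ^ k) := by gcongr; exact_mod_cast hcard k
      _ = C ^ d * (N * r ^ d) ^ k := by ring
  have hdiam_tendsto : Tendsto (fun k : ℕ => C * r ^ k) atTop (𝓝 0) := by
    simpa using ENNReal.Tendsto.const_mul (ENNReal.tendsto_pow_atTop_nhds_zero_of_lt_one hr)
      (Or.inr hC)
  have hsum_tendsto : Tendsto (fun k : ℕ => C ^ d * (N * r ^ d) ^ k) atTop (𝓝 0) := by
    simpa using ENNReal.Tendsto.const_mul (ENNReal.tendsto_pow_atTop_nhds_zero_of_lt_one hNr)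
      (Or.inr (ENNReal.rpow_ne_top_of_nonneg hd hC))
  refine le_antisymm ?_ zero_le
  calc μH[d] s ≤ liminf (fun k => ∑ i, ediam (t k i) ^ d) atTop :=
        MeasureTheory.Measure.hausdorffMeasure_le_liminf_sum d s _ hdiam_tendsto t
          (.of_forall hdiam) (.of_forall hcover)
    _ ≤ liminf (fun k => C ^ d * (N * r ^ d) ^ k) atTop := liminf_le_liminf (.of_forall hsum)
    _ = 0 := hsum_tendsto.liminf_eq

theorem dimH_le_of_geometric_cover {C : ℝ≥0∞} {r : ℝ≥0} (hC : C ≠ ∞) (hr0 : 0 < r) (hr1 : r < 1)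
    (hcard : ∀ k, Fintype.card (ι k) ≤ N ^ k) (hcover : ∀ k, s ⊆ ⋃ i, t k i)
    (hdiam : ∀ k i, ediam (t k i) ≤ C * r ^ k) :
    dimH s ≤ ENNReal.ofReal (Real.log N / -Real.log r) := by
  have hlog : 0 < -Real.log r := neg_pos.2 (Real.log_neg hr0 hr1)
  refine dimH_le fun d hd => le_of_not_gt fun hlt => ?_
  rw [ENNReal.ofReal_lt_iff_lt_toReal (by positivity) ENNReal.coe_ne_top, ENNReal.coe_toReal,
    div_lt_iff₀ hlog] at hlt
  have hNr : (N : ℝ≥0∞) * (r : ℝ≥0∞) ^ (d : ℝ) < 1 := by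
    rw [← ENNReal.coe_rpow_of_nonneg _ d.coe_nonneg, ← ENNReal.coe_natCast, ← ENNReal.coe_mul,
      ENNReal.coe_lt_one_iff, ← NNReal.coe_lt_coe, NNReal.coe_mul, NNReal.coe_rpow]
    rcases N.eq_zero_or_pos with rfl | hN
    · simp
    have hlog_lt : Real.log (N * (r : ℝ) ^ (d : ℝ)) < 0 := by
      rw [Real.log_mul (by positivity) (by positivity), Real.log_rpow (NNReal.coe_pos.2 hr0)]
      linarith
    exact (Real.log_neg_iff (by positivity)).1 hlog_lt
  exact ENNReal.zero_ne_top <| (hausdorffMeasure_eq_zero_of_geometric_cover hC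
    (ENNReal.coe_lt_one_iff.2 hr1) d.coe_nonneg hNr hcard hcover hdiam).symm.trans hd

end HausdorffDimension

theorem exists_nnnorm_pow_le_mul_pow_of_spectralRadius_lt {A : Type*} [NormedRing A]
    [NormedAlgebra ℂ A] [CompleteSpace A] (x : A) {r : ℝ≥0} (hr : spectralRadius ℂ x < r) :
    ∃ C : ℝ≥0, ∀ k : ℕ, ‖x ^ k‖₊ ≤ C * r ^ k := by
  have hr0 : r ≠ 0 := by rintro rfl; exact not_lt_zero hr
  have hev : ∀ᶠ k : ℕ in atTop, ‖x ^ k‖ ≤ 1 * ‖(r : ℝ) ^ k‖ := by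
    filter_upwards [(spectrum.gelfand_formula x).eventually_lt_const hr, eventually_ne_atTop 0]
      with k hk hk0
    rw [one_div, ENNReal.rpow_inv_lt_iff (by positivity), ENNReal.rpow_natCast] at hk
    rw [one_mul, Real.norm_of_nonneg (by positivity), ← coe_nnnorm, ← NNReal.coe_pow,
      NNReal.coe_le_coe]
    exact_mod_cast hk.le
  obtain ⟨C, hC⟩ := (Asymptotics.isBigO_nat_atTop_iff fun k hk =>
    absurd hk (pow_ne_zero k (NNReal.coe_ne_zero.2 hr0))).1 (Asymptotics.IsBigO.of_bound 1 hev)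
  refine ⟨C.toNNReal, fun k => ?_⟩
  rw [← NNReal.coe_le_coe, coe_nnnorm, NNReal.coe_mul, NNReal.coe_pow]
  calc ‖x ^ k‖ ≤ C * ‖(r : ℝ) ^ k‖ := hC k
    _ ≤ C.toNNReal * (r : ℝ) ^ k := by
      rw [Real.norm_of_nonneg (by positivity)]; gcongr; exact C.le_coe_toNNReal

namespace Matrix

attribute [local instance] Matrix.linftyOpSeminormedAddCommGroup Matrix.linftyOpNormedRing
  Matrix.linftyOpNormedAlgebra

theorem linfty_opNNNorm_map_eq {m n α β : Type*} [Fintype m] [Fintype n]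
    [SeminormedAddCommGroup α] [SeminormedAddCommGroup β] (A : Matrix m n α) (f : α → β)
    (hf : ∀ a, ‖f a‖₊ = ‖a‖₊) : ‖A.map f‖₊ = ‖A‖₊ := by
  simp [linfty_opNNNorm_def, hf]

theorem norm_le_inv_of_mem_spectrum_inv {K ι : Type*} [NormedField K] [Fintype ι] [DecidableEq ι]
    {M : Matrix ι ι K} (hM : IsUnit M.det) {a : ℝ} (ha : 0 < a)
    (hmin : ∀ z ∈ M.charpoly.roots, a ≤ ‖z‖) {μ : K} (hμ : μ ∈ spectrum K M⁻¹) :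
    ‖μ‖ ≤ a⁻¹ := by
  obtain ⟨u, rfl⟩ := (isUnit_iff_isUnit_det M).2 hM
  rw [← coe_units_inv, ← spectrum.map_inv, Set.mem_inv, mem_spectrum_iff_isRoot_charpoly] at hμ
  have h := hmin _ ((Polynomial.mem_roots (charpoly_monic _).ne_zero).2 hμ)
  rw [norm_inv] at h
  exact (le_inv_comm₀ ha (inv_pos.1 (ha.trans_le h))).1 h

theorem exists_nnnorm_inv_pow_le {ι : Type*} [Fintype ι] [DecidableEq ι] {A : Matrix ι ι ℝ}
    (hA : IsUnit A.det)
    {a : ℝ} (ha : 0 < a) (hmin : ∀ z ∈ (A.charpoly.map (algebraMap ℝ ℂ)).roots, a ≤ ‖z‖)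
    {r : ℝ≥0} (hr : a⁻¹ < r) : ∃ C : ℝ≥0, ∀ k : ℕ, ‖A⁻¹ ^ k‖₊ ≤ C * r ^ k := by
  set f := algebraMap ℝ ℂ
  have hinv : (A.map f)⁻¹ = A⁻¹.map f := inv_eq_right_inv <| by
    rw [← Matrix.map_mul, mul_nonsing_inv _ hA, Matrix.map_one _ (map_zero f) (map_one f)]
  have hdet : IsUnit (A.map f).det := by
    rw [← RingHom.mapMatrix_apply, ← RingHom.map_det]; exact hA.map f
  have hspec : spectralRadius ℂ (A.map f)⁻¹ ≤ ENNReal.ofReal a⁻¹ := iSup₂_le fun μ hμ => by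
    rw [← ENNReal.ofReal_coe_nnreal, coe_nnnorm]
    exact ENNReal.ofReal_le_ofReal <| norm_le_inv_of_mem_spectrum_inv hdet ha
      (by rwa [charpoly_map]) hμ
  obtain ⟨C, hC⟩ := exists_nnnorm_pow_le_mul_pow_of_spectralRadius_lt _ <| hspec.trans_lt <| by
    rwa [ENNReal.ofReal_lt_iff_lt_toReal (by positivity) ENNReal.coe_ne_top, ENNReal.coe_toReal]
  refine ⟨C, fun k => ?_⟩
  rw [← linfty_opNNNorm_map_eq (A⁻¹ ^ k) f fun x => Complex.nnnorm_real x, Matrix.map_pow, ← hinv]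
  exact hC k

theorem ediam_mulVec_add_image_le {m n α : Type*} [Fintype m] [Fintype n] [SeminormedRing α]
    (M : Matrix m n α) (c : m → α) (s : Set (n → α)) :
    ediam ((fun x => M *ᵥ x + c) '' s) ≤ ‖M‖₊ * ediam s := by
  refine LipschitzWith.ediam_image_le (LipschitzWith.of_dist_le_mul fun x y => ?_) s
  rw [dist_eq_norm, dist_eq_norm, add_sub_add_right_eq_sub, ← mulVec_sub]
  exact linfty_opNorm_mulVec M (x - y)

theorem exists_ediam_inv_pow_image_le {ι : Type*} [Fintype ι] [DecidableEq ι]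
    {A : Matrix ι ι ℝ} (hA : IsUnit A.det)
    {a : ℝ} (ha : 0 < a) (hmin : ∀ z ∈ (A.charpoly.map (algebraMap ℝ ℂ)).roots, a ≤ ‖z‖)
    {r : ℝ≥0} (hr : a⁻¹ < r) : ∃ C : ℝ≥0, ∀ (k : ℕ) (c : ι → ℝ) (s : Set (ι → ℝ)),
      ediam ((fun x => A⁻¹ ^ k *ᵥ x + c) '' s) ≤ C * r ^ k * ediam s := by
  obtain ⟨C, hC⟩ := exists_nnnorm_inv_pow_le hA ha hmin hr
  refine ⟨C, fun k c s => (ediam_mulVec_add_image_le _ c s).trans ?_⟩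
  gcongr
  exact_mod_cast hC k

end Matrix

theorem exists_finset_subset_biUnion_inv_pow_image {n : ℕ} (A : Matrix (Fin n) (Fin n) ℝ)
    (Q : Finset (Fin n → ℝ)) {Λ : Set (Fin n → ℝ)} (hΛ : Λ ⊆ tauIFS A Q Λ) (k : ℕ) :
    ∃ T : Finset (Fin n → ℝ), T.card ≤ Q.card ^ k ∧
      Λ ⊆ ⋃ c ∈ T, (fun x => A⁻¹ ^ k *ᵥ x + c) '' Λ := by
  classical
  induction k with
  | zero => exact ⟨{0}, by simp, fun x hx => by simpa using hx⟩
  | succ k ih =>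
    obtain ⟨T, hTcard, hTcover⟩ := ih
    refine ⟨(T ×ˢ Q).image fun p => A⁻¹ *ᵥ (p.1 + p.2), ?_, fun x hx => ?_⟩
    · calc _ ≤ (T ×ˢ Q).card := Finset.card_image_le
        _ = T.card * Q.card := Finset.card_product T Q
        _ ≤ Q.card ^ (k + 1) := by rw [pow_succ]; gcongr
    obtain ⟨q, hq, y, hy, rfl⟩ : ∃ q ∈ Q, ∃ y ∈ Λ, A⁻¹ *ᵥ (y + q) = x := by
      simpa [tauIFS] using hΛ hx
    obtain ⟨c, hc, z, hz, rfl⟩ : ∃ c ∈ T, ∃ z ∈ Λ, A⁻¹ ^ k *ᵥ z + c = y := by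
      simpa using hTcover hy
    refine Set.mem_biUnion (Finset.mem_image_of_mem _ (Finset.mk_mem_product hc hq)) ⟨z, hz, ?_⟩
    simp only [pow_succ', ← mulVec_mulVec, mulVec_add, add_assoc]

theorem le_ofReal_div_neg_log_of_forall_Ioo {x : ℝ≥0∞} {L ρ : ℝ} (hρ0 : 0 < ρ) (hρ1 : ρ < 1)
    (h : ∀ r ∈ Set.Ioo ρ 1, x ≤ ENNReal.ofReal (L / -Real.log r)) :
    x ≤ ENNReal.ofReal (L / -Real.log ρ) := by
  have hcont : ContinuousAt (fun r => ENNReal.ofReal (L / -Real.log r)) ρ :=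
    ENNReal.continuous_ofReal.continuousAt.comp <| continuousAt_const.div
      (Real.continuousAt_log hρ0.ne').neg (neg_ne_zero.2 (Real.log_neg hρ0 hρ1).ne)
  refine ge_of_tendsto (hcont.tendsto.mono_left (nhdsWithin_le_nhds (s := Set.Ioi ρ))) ?_
  filter_upwards [Ioo_mem_nhdsGT hρ1] using h

theorem stmt13_general (n : ℕ) (A : Matrix (Fin n) (Fin n) ℝ) (hdet : IsUnit A.det)
    (Q : Finset (Fin n → ℝ)) (a : ℝ) (ha : 1 < a)
    (hmin : ∀ z ∈ (A.charpoly.map (algebraMap ℝ ℂ)).roots, a ≤ ‖z‖)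
    (Λ : Set (Fin n → ℝ)) (hc : IsCompact Λ)
    (hfix : tauIFS A (↑Q) Λ = Λ) :
    dimH Λ ≤ ENNReal.ofReal (Real.log Q.card / Real.log a) := by
  have ha0 : 0 < a := one_pos.trans ha
  choose T hTcard hTcover using exists_finset_subset_biUnion_inv_pow_image A Q hfix.ge
  have hdimH : ∀ r ∈ Set.Ioo a⁻¹ 1,
      dimH Λ ≤ ENNReal.ofReal (Real.log Q.card / -Real.log r) := by
    rintro r ⟨har, hr1⟩
    lift r to ℝ≥0 using ((inv_pos.2 ha0).trans har).le
    obtain ⟨C, hC⟩ := exists_ediam_inv_pow_image_le hdet ha0 hmin har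
    exact dimH_le_of_geometric_cover (t := fun k (c : T k) => (fun x => A⁻¹ ^ k *ᵥ x + c) '' Λ)
      (ENNReal.mul_ne_top ENNReal.coe_ne_top hc.isBounded.ediam_ne_top)
      (by exact_mod_cast (inv_pos.2 ha0).trans har) (by exact_mod_cast hr1)
      (by simpa using hTcard) (fun k => by simpa [Set.iUnion_subtype] using hTcover k)
      (fun k c => (hC k c Λ).trans_eq (mul_right_comm _ _ _))
  simpa [Real.log_inv] using
    le_ofReal_div_neg_log_of_forall_Ioo (inv_pos.2 ha0) (inv_lt_one_of_one_lt₀ ha) hdimH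

/-- the Hausdorff dimension of the attractor `Λ(A,Q)` is at most
`ln(card Q)/ln(a₋)`, where `a₋ > 1` is the smallest modulus of an eigenvalue of
`A` (so `a₋⁻¹` is the spectral radius of `A⁻¹`). -/
theorem stmt13 (n : ℕ) (A : Matrix (Fin n) (Fin n) ℝ) (hdet : IsUnit A.det)
    (hexp : IsExpandingMatrix A) (Q : Finset (Fin n → ℝ)) (hQ : Q.Nonempty)
    (a : ℝ) (ha : 1 < a)
    (hmin : ∀ z ∈ (A.charpoly.map (algebraMap ℝ ℂ)).roots, a ≤ ‖z‖)
    (hattained : ∃ z ∈ (A.charpoly.map (algebraMap ℝ ℂ)).roots, ‖z‖ = a)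
    (Λ : Set (Fin n → ℝ)) (hne : Λ.Nonempty) (hc : IsCompact Λ)
    (hfix : tauIFS A (↑Q) Λ = Λ) :
    dimH Λ ≤ ENNReal.ofReal (Real.log Q.card / Real.log a) :=
  stmt13_general n A hdet Q a ha hmin Λ hc hfix
end
end

section
/- For the one-dimensional pair (M,R) = (m, {0,2,4,…,m−2} ∪ {m+1,m+3,…,2m−1}) with m ≥ 4 even, the reduced transition matrix is T⁺ = [[m,0,0],[0,m−1,1],[m−2,2,0]] on S⁺ = {0,1,2}, and its eigenvalues are m and ((m−1) ± √((m−1)² + 8))/2; the leading special eigenvalue is ((m−1) + √((m−1)² + 8))/2. -/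
open Set
open scoped Pointwise

noncomputable section

namespace Stmt19Aux

open Polynomial

def apset (a t : ℤ) : Finset ℤ := (Finset.Icc 0 t).image (fun i => a + 2*i)

lemma mem_apset {a t x : ℤ} : x ∈ apset a t ↔ a ≤ x ∧ x ≤ a + 2*t ∧ (x - a) % 2 = 0 := by
  simp only [apset, Finset.mem_image, Finset.mem_Icc]
  constructor
  · rintro ⟨i, ⟨h1, h2⟩, rfl⟩; omega
  · intro h; exact ⟨(x - a)/2, ⟨by omega, by omega⟩, by omega⟩

lemma card_apset (a t : ℤ) : (apset a t).card = (t+1).toNat := by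
  rw [apset, Finset.card_image_of_injective _ (fun x y h => by omega), Int.card_Icc]
  congr 1; omega

lemma count_pairs (R : Finset ℤ) (c : ℤ) :
    Multiset.count c ((R ×ˢ R).val.map fun p => p.1 - p.2)
      = (R.filter fun r => r - c ∈ R).card := by
  rw [Multiset.count_map]
  have h1 : Multiset.card (Multiset.filter (fun p => c = p.1 - p.2) (R ×ˢ R).val)
      = ((R ×ˢ R).filter (fun p => c = p.1 - p.2)).card := rfl
  rw [h1]
  apply Finset.card_bij (fun p _ => p.1)
  · intro p hp
    simp only [Finset.mem_filter, Finset.mem_product] at hp ⊢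
    refine ⟨hp.1.1, ?_⟩
    have : p.1 - c = p.2 := by omega
    rw [this]; exact hp.1.2
  · intro p hp q hq h
    simp only [Finset.mem_filter, Finset.mem_product] at hp hq
    have : p.2 = q.2 := by omega
    exact Prod.ext h this
  · intro r hr
    simp only [Finset.mem_filter] at hr
    refine ⟨(r, r - c), ?_, rfl⟩
    simp only [Finset.mem_filter, Finset.mem_product]
    exact ⟨⟨hr.1, hr.2⟩, by omega⟩


lemma charpoly3 (a b c d e f g h i : ℝ) :
    (!![a,b,c;d,e,f;g,h,i]).charpoly =
      X^3 - C (a+e+i) * X^2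
        + C (a*e+a*i+e*i-b*d-c*g-f*h) * X
        - C (a*e*i - a*f*h - b*d*i + b*f*g + c*d*h - c*e*g) := by
  rw [Matrix.charpoly, Matrix.det_fin_three]
  simp [Matrix.charmatrix_apply, Matrix.diagonal, Matrix.one_apply]
  ring

lemma expand3 (a b c : ℝ) :
    (X - C a) * (X - C b) * (X - C c) =
      X^3 - C (a+b+c) * X^2 + C (a*b+a*c+b*c) * X - C (a*b*c) := by
  simp only [C_add, C_mul]
  ring

lemma roots3 (a b c : ℝ) :
    ((X - C a) * (X - C b) * (X - C c)).roots = {a, b, c} := by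
  rw [roots_mul (by
      apply mul_ne_zero (mul_ne_zero (X_sub_C_ne_zero a) (X_sub_C_ne_zero b)) (X_sub_C_ne_zero c)),
    roots_mul (mul_ne_zero (X_sub_C_ne_zero a) (X_sub_C_ne_zero b)),
    roots_X_sub_C, roots_X_sub_C, roots_X_sub_C]
  rfl


end Stmt19Aux

open Stmt19Aux Polynomial

/-- for the one-dimensional pair
`(m, {0,2,4,…,m-2} ∪ {m+1,m+3,…,2m-1})` with `m ≥ 4` even: `S⁺ = {0,1,2}`
(indeed `S = {-2,-1,0,1,2}`), the reduced transition matrix on `S⁺` is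
`T⁺ = [[m,0,0],[0,m-1,1],[m-2,2,0]]`, its eigenvalues are `m` and
`((m-1) ± √((m-1)² + 8))/2`, and the leading special eigenvalue is
`((m-1) + √((m-1)² + 8))/2`. -/
theorem stmt19 (m : ℤ) (hm : 4 ≤ m) (hmeven : Even m)
    (R : Finset ℤ)
    (hR : R = ((Finset.Icc 0 (m - 2)).filter (fun x => Even x)) ∪
      ((Finset.Icc (m + 1) (2 * m - 1)).filter (fun x => Odd x)))
    (Λ : Set ℝ) (hc : IsCompact Λ) (hne : Λ.Nonempty)
    (hfix : Λ = ⋃ r ∈ R, (fun x => (x + (r : ℝ)) / (m : ℝ)) '' Λ)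
    (D : Multiset ℤ) (hD : D = (R ×ˢ R).val.map fun p => p.1 - p.2)
    (T : ℤ → ℤ → ℕ) (hT : ∀ i j, T i j = Multiset.count i (D.map fun d => m * j + d)) :
    {z : ℤ | (z : ℝ) ∈ Λ - Λ} = {-2, -1, 0, 1, 2} ∧
    ((T 0 0 : ℤ) = m ∧ T 0 1 + T 0 (-1) = 0 ∧ T 0 2 + T 0 (-2) = 0 ∧
      T 1 0 = 0 ∧ (T 1 1 + T 1 (-1) : ℤ) = m - 1 ∧ T 1 2 + T 1 (-2) = 1 ∧
      (T 2 0 : ℤ) = m - 2 ∧ T 2 1 + T 2 (-1) = 2 ∧ T 2 2 + T 2 (-2) = 0) ∧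
    (!![(m : ℝ), 0, 0; 0, (m : ℝ) - 1, 1; (m : ℝ) - 2, 2, 0]).charpoly.roots =
      {(m : ℝ), (((m : ℝ) - 1) + Real.sqrt (((m : ℝ) - 1) ^ 2 + 8)) / 2,
        (((m : ℝ) - 1) - Real.sqrt (((m : ℝ) - 1) ^ 2 + 8)) / 2} ∧
    ((((m : ℝ) - 1) + Real.sqrt (((m : ℝ) - 1) ^ 2 + 8)) / 2 ∈
        (!![(m : ℝ), 0, 0; 0, (m : ℝ) - 1, 1; (m : ℝ) - 2, 2, 0]).charpoly.roots ∧
      (1 : ℝ) ≤ (((m : ℝ) - 1) + Real.sqrt (((m : ℝ) - 1) ^ 2 + 8)) / 2 ∧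
      (((m : ℝ) - 1) + Real.sqrt (((m : ℝ) - 1) ^ 2 + 8)) / 2 < (m : ℝ) ∧
      ∀ x ∈ (!![(m : ℝ), 0, 0; 0, (m : ℝ) - 1, 1; (m : ℝ) - 2, 2, 0]).charpoly.roots,
        1 ≤ x → x < (m : ℝ) →
          x ≤ (((m : ℝ) - 1) + Real.sqrt (((m : ℝ) - 1) ^ 2 + 8)) / 2) := by
  refine ⟨?_, ?_, ?_⟩
  · -- Part 1: Λ - Λ ∩ ℤ = {-2,...,2}
    have hm2 : m % 2 = 0 := Int.even_iff.mp hmeven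
    have hm4 : (4 : ℝ) ≤ (m : ℝ) := by exact_mod_cast hm
    have hm0 : (0 : ℝ) < (m : ℝ) := by linarith
    have hm1 : (1 : ℝ) < (m : ℝ) := by linarith
    have hmne : (m : ℝ) ≠ 0 := ne_of_gt hm0
    have hm1ne : (m : ℝ) - 1 ≠ 0 := by linarith
    have hmem : ∀ r : ℤ, r ∈ R ↔ (0 ≤ r ∧ r ≤ m - 2 ∧ r % 2 = 0) ∨
        (m + 1 ≤ r ∧ r ≤ 2*m - 1 ∧ r % 2 = 1) := by
      intro r
      rw [hR]
      simp only [Finset.mem_union, Finset.mem_filter, Finset.mem_Icc, Int.even_iff, Int.odd_iff]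
      omega
    have h0R : (0 : ℤ) ∈ R := by rw [hmem]; omega
    have hm1R : (m + 1 : ℤ) ∈ R := by rw [hmem]; omega
    have h2m1R : (2*m - 1 : ℤ) ∈ R := by rw [hmem]; omega
    -- invariance
    have hinv : ∀ r : ℤ, r ∈ R → ∀ x ∈ Λ, (x + (r : ℝ)) / (m : ℝ) ∈ Λ := by
      intro r hr x hx
      rw [hfix]
      exact Set.mem_biUnion hr ⟨x, hx, rfl⟩
    -- bounds on R
    have hRb : ∀ r : ℤ, r ∈ R → (0 : ℝ) ≤ (r : ℝ) ∧ (r : ℝ) ≤ 2*(m : ℝ) - 1 := by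
      intro r hr
      rw [hmem] at hr
      constructor
      · exact_mod_cast (by omega : (0:ℤ) ≤ r)
      · have : (r : ℤ) ≤ 2*m - 1 := by omega
        exact_mod_cast this
    -- upper bound on Λ
    have hub : ∀ y ∈ Λ, y ≤ (2*(m:ℝ) - 1)/((m:ℝ) - 1) := by
      have hbΛ : sSup Λ ∈ Λ := hc.sSup_mem hne
      set b := sSup Λ with hbdef
      have hb2 : b ∈ ⋃ r ∈ R, (fun x => (x + (r : ℝ)) / (m : ℝ)) '' Λ := by
        rw [← hfix]; exact hbΛ
      simp only [Set.mem_iUnion, Set.mem_image] at hb2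
      obtain ⟨r, hr, x, hx, hxe⟩ := hb2
      have hxb : x ≤ b := le_csSup hc.bddAbove hx
      have hrb := (hRb r hr).2
      rw [div_eq_iff hmne] at hxe
      have hble : b ≤ (2*(m:ℝ) - 1)/((m:ℝ) - 1) := by
        rw [le_div_iff₀ (by linarith)]
        nlinarith [hxe, hxb, hrb]
      intro y hy
      exact le_trans (le_csSup hc.bddAbove hy) hble
    -- lower bound
    have hlb : ∀ y ∈ Λ, (0 : ℝ) ≤ y := by
      have haΛ : sInf Λ ∈ Λ := hc.sInf_mem hne
      set a := sInf Λ with hadef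
      have ha2 : a ∈ ⋃ r ∈ R, (fun x => (x + (r : ℝ)) / (m : ℝ)) '' Λ := by
        rw [← hfix]; exact haΛ
      simp only [Set.mem_iUnion, Set.mem_image] at ha2
      obtain ⟨r, hr, x, hx, hxe⟩ := ha2
      have hxa : a ≤ x := csInf_le hc.bddBelow hx
      have hrb := (hRb r hr).1
      rw [div_eq_iff hmne] at hxe
      have hage : 0 ≤ a := by
        by_contra hneg
        push_neg at hneg
        nlinarith [hxe, hxa, hrb, mul_pos (show (0:ℝ) < -a by linarith)
          (show (0:ℝ) < (m:ℝ) - 1 by linarith)]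
      intro y hy
      exact le_trans hage (csInf_le hc.bddBelow hy)
    -- the periodic point p = m/(m-1) ∈ Λ
    set p : ℝ := (m : ℝ) / ((m : ℝ) - 1) with hpdef
    have hp : p ∈ Λ := by
      obtain ⟨y₀, hy₀⟩ := hne
      set q : ℝ := (((m:ℝ))^2)⁻¹ with hqdef
      have hq1 : q * (m:ℝ)^2 = 1 := by
        rw [hqdef]; field_simp
      set a : ℕ → ℝ := fun n => p + (y₀ - p) * q^n with hadef
      have haΛ : ∀ n, a n ∈ Λ := by
        intro n
        induction n with
        | zero =>
          have : a 0 = y₀ := by rw [hadef]; simp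
          rw [this]; exact hy₀
        | succ n ih =>
          have h1 := hinv 0 h0R (a n) ih
          have h2 := hinv (m+1) hm1R _ h1
          have heq : ((a n + ((0:ℤ):ℝ)) / (m:ℝ) + ((m+1 : ℤ):ℝ)) / (m:ℝ) = a (n+1) := by
            push_cast
            rw [hadef]
            simp only [hpdef, hqdef, pow_succ]
            field_simp
            ring
          rw [← heq]; exact h2
      have hq01 : 0 ≤ q ∧ q < 1 := by
        constructor
        · rw [hqdef]; positivity
        · rw [hqdef, inv_lt_one_iff₀]
          right; nlinarith
      have hlim : Filter.Tendsto a Filter.atTop (nhds p) := by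
        have h1 : Filter.Tendsto (fun n : ℕ => q^n) Filter.atTop (nhds 0) :=
          tendsto_pow_atTop_nhds_zero_of_lt_one hq01.1 hq01.2
        have h2 := (h1.const_mul (y₀ - p)).const_add p
        simpa using h2
      exact hc.isClosed.mem_of_tendsto hlim (Filter.Eventually.of_forall haΛ)
    -- the other points
    have hp1 : (p + ((0:ℤ):ℝ)) / (m:ℝ) ∈ Λ := hinv 0 h0R p hp
    have hx2 : (p + ((2*m - 1 : ℤ):ℝ)) / (m:ℝ) ∈ Λ := hinv (2*m-1) h2m1R p hp
    have hy2 : (((p + ((0:ℤ):ℝ)) / (m:ℝ)) + ((0:ℤ):ℝ)) / (m:ℝ) ∈ Λ :=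
      hinv 0 h0R _ hp1
    -- now the set equality
    ext z
    simp only [Set.mem_setOf_eq, Set.mem_insert_iff, Set.mem_singleton_iff]
    constructor
    · intro hz
      rw [Set.mem_sub] at hz
      obtain ⟨x, hx, y, hy, hxy⟩ := hz
      have hub3 : (2*(m:ℝ) - 1)/((m:ℝ) - 1) < 3 := by
        rw [div_lt_iff₀ (by linarith)]; linarith
      have h1 : (z : ℝ) < 3 := by
        rw [← hxy]
        have := hub x hx
        have := hlb y hy
        linarith
      have h2 : (-3 : ℝ) < (z : ℝ) := by
        rw [← hxy]
        have := hub y hy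
        have := hlb x hx
        linarith
      have hz3 : z < 3 := by exact_mod_cast h1
      have hz3' : -3 < z := by exact_mod_cast h2
      omega
    · have key1 : p - (p + (0:ℝ)) / (m:ℝ) = 1 := by
        rw [hpdef]; field_simp; ring
      have key2 : (p + (2*(m:ℝ) - 1)) / (m:ℝ)
          - (((p + (0:ℝ)) / (m:ℝ)) + (0:ℝ)) / (m:ℝ) = 2 := by
        rw [hpdef]; field_simp; ring
      rintro (rfl | rfl | rfl | rfl | rfl) <;> rw [Set.mem_sub]
      · exact ⟨_, hy2, _, hx2, by push_cast; linarith [key2]⟩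
      · exact ⟨_, hp1, _, hp, by push_cast; linarith [key1]⟩
      · exact ⟨p, hp, p, hp, by push_cast; ring⟩
      · exact ⟨_, hp, _, hp1, by push_cast; linarith [key1]⟩
      · exact ⟨_, hx2, _, hy2, by push_cast; linarith [key2]⟩
  · -- Part 2: the transition matrix entries
    obtain ⟨k, hk⟩ := hmeven
    have hmem : ∀ r : ℤ, r ∈ R ↔ (0 ≤ r ∧ r ≤ m - 2 ∧ r % 2 = 0) ∨
        (m + 1 ≤ r ∧ r ≤ 2*m - 1 ∧ r % 2 = 1) := by
      intro r
      rw [hR]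
      simp only [Finset.mem_union, Finset.mem_filter, Finset.mem_Icc, Int.even_iff, Int.odd_iff]
      omega
    have hTc : ∀ i j : ℤ, T i j = (R.filter fun r => r - (i - m*j) ∈ R).card := by
      intro i j
      rw [hT, hD, Multiset.map_map]
      have : Multiset.count i (Multiset.map ((fun d => m * j + d) ∘ fun p : ℤ × ℤ => p.1 - p.2) (R ×ˢ R).val)
          = Multiset.count i (Multiset.map (fun p : ℤ × ℤ => p.1 - p.2 + m * j) (R ×ˢ R).val) := by
        congr 1; apply Multiset.map_congr rfl; intro p _; simp [Function.comp]; ring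
      rw [this]
      have h2 : Multiset.count i (Multiset.map (fun p : ℤ × ℤ => p.1 - p.2 + m * j) (R ×ˢ R).val)
          = Multiset.count (i - m*j) (Multiset.map (fun p : ℤ × ℤ => p.1 - p.2) (R ×ˢ R).val) := by
        rw [Multiset.count_map, Multiset.count_map]
        congr 1
        apply Multiset.filter_congr
        intro p _
        constructor <;> intro h <;> omega
      rw [h2, count_pairs]
    -- empties
    have hemp : ∀ c : ℤ, (¬ ∃ r : ℤ, ((0 ≤ r ∧ r ≤ m - 2 ∧ r % 2 = 0) ∨
        (m + 1 ≤ r ∧ r ≤ 2*m - 1 ∧ r % 2 = 1)) ∧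
        ((0 ≤ r - c ∧ r - c ≤ m - 2 ∧ (r - c) % 2 = 0) ∨
        (m + 1 ≤ r - c ∧ r - c ≤ 2*m - 1 ∧ (r - c) % 2 = 1))) →
        (R.filter fun r => r - c ∈ R) = ∅ := by
      intro c hno
      apply Finset.eq_empty_iff_forall_notMem.mpr
      intro r hr
      simp only [Finset.mem_filter, hmem] at hr
      exact hno ⟨r, hr⟩
    have e00 : (R.filter fun r => r - (0 - m*0) ∈ R) = apset 0 (k-1) ∪ apset (m+1) (k-1) := by
      ext r
      simp only [Finset.mem_filter, Finset.mem_union, mem_apset, hmem]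
      omega
    have c00 : (T 0 0 : ℤ) = m := by
      rw [hTc, e00, Finset.card_union_of_disjoint, card_apset, card_apset]
      · push_cast; omega
      · rw [Finset.disjoint_left]; intro a ha hb; rw [mem_apset] at ha hb; omega
    have c01 : T 0 1 = 0 := by
      rw [hTc, hemp _ (by push_neg; intro r; omega), Finset.card_empty]
    have c0m1 : T 0 (-1) = 0 := by
      rw [hTc, hemp _ (by push_neg; intro r; omega), Finset.card_empty]
    have c02 : T 0 2 = 0 := by
      rw [hTc, hemp _ (by push_neg; intro r; omega), Finset.card_empty]
    have c0m2 : T 0 (-2) = 0 := by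
      rw [hTc, hemp _ (by push_neg; intro r; omega), Finset.card_empty]
    have c10 : T 1 0 = 0 := by
      rw [hTc, hemp _ (by push_neg; intro r; omega), Finset.card_empty]
    have c11 : (T 1 1 : ℤ) = k - 1 := by
      have e : (R.filter fun r => r - (1 - m*1) ∈ R) = apset 2 (k-2) := by
        ext r
        simp only [Finset.mem_filter, mem_apset, hmem]
        omega
      rw [hTc, e, card_apset]; omega
    have c1m1 : (T 1 (-1) : ℤ) = k := by
      have e : (R.filter fun r => r - (1 - m*(-1)) ∈ R) = apset (m+1) (k-1) := by
        ext r
        simp only [Finset.mem_filter, mem_apset, hmem]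
        omega
      rw [hTc, e, card_apset]; omega
    have c12 : T 1 2 = 1 := by
      have e : (R.filter fun r => r - (1 - m*2) ∈ R) = {0} := by
        ext r
        simp only [Finset.mem_filter, Finset.mem_singleton, hmem]
        omega
      rw [hTc, e, Finset.card_singleton]
    have c1m2 : T 1 (-2) = 0 := by
      rw [hTc, hemp _ (by push_neg; intro r; omega), Finset.card_empty]
    have c20 : (T 2 0 : ℤ) = m - 2 := by
      have e : (R.filter fun r => r - (2 - m*0) ∈ R) = apset 2 (k-2) ∪ apset (m+3) (k-2) := by
        ext r
        simp only [Finset.mem_filter, Finset.mem_union, mem_apset, hmem]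
        omega
      rw [hTc, e, Finset.card_union_of_disjoint, card_apset, card_apset]
      · push_cast; omega
      · rw [Finset.disjoint_left]; intro a ha hb; rw [mem_apset] at ha hb; omega
    have c21 : T 2 1 = 2 := by
      have e : (R.filter fun r => r - (2 - m*1) ∈ R) = {0, m+1} := by
        ext r
        simp only [Finset.mem_filter, Finset.mem_insert, Finset.mem_singleton, hmem]
        omega
      rw [hTc, e, Finset.card_insert_of_notMem, Finset.card_singleton]
      simp only [Finset.mem_singleton]
      omega
    have c2m1 : T 2 (-1) = 0 := by
      rw [hTc, hemp _ (by push_neg; intro r; omega), Finset.card_empty]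
    have c22 : T 2 2 = 0 := by
      rw [hTc, hemp _ (by push_neg; intro r; omega), Finset.card_empty]
    have c2m2 : T 2 (-2) = 0 := by
      rw [hTc, hemp _ (by push_neg; intro r; omega), Finset.card_empty]
    refine ⟨c00, by omega, by omega, c10, by omega, by omega, c20, by omega, by omega⟩
  · -- Parts 3 and 4: eigenvalues
    have hm4 : (4 : ℝ) ≤ (m : ℝ) := by exact_mod_cast hm
    set s : ℝ := Real.sqrt (((m : ℝ) - 1) ^ 2 + 8) with hs
    have hs0 : 0 ≤ s := Real.sqrt_nonneg _
    have hssq : s ^ 2 = ((m : ℝ) - 1) ^ 2 + 8 := Real.sq_sqrt (by positivity)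
    set α : ℝ := (((m : ℝ) - 1) + s) / 2 with hα
    set β : ℝ := (((m : ℝ) - 1) - s) / 2 with hβ
    have hsum : α + β = (m : ℝ) - 1 := by rw [hα, hβ]; ring
    have hprod : α * β = -2 := by
      rw [hα, hβ]
      have : (((m : ℝ) - 1) + s) / 2 * ((((m : ℝ) - 1) - s) / 2)
          = (((m : ℝ) - 1)^2 - s^2) / 4 := by ring
      rw [this, hssq]; ring
    have key : (!![(m : ℝ), 0, 0; 0, (m : ℝ) - 1, 1; (m : ℝ) - 2, 2, 0]).charpoly
        = (X - C (m : ℝ)) * (X - C α) * (X - C β) := by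
      rw [charpoly3, expand3]
      have h1 : (m : ℝ) + ((m : ℝ) - 1) + 0 = (m : ℝ) + α + β := by rw [← hsum]; ring
      have h2 : (m : ℝ) * ((m : ℝ) - 1) + (m : ℝ) * 0 + ((m : ℝ) - 1) * 0 - 0 * 0
          - 0 * ((m : ℝ) - 2) - 1 * 2 = (m : ℝ) * α + (m : ℝ) * β + α * β := by
        have : (m : ℝ) * α + (m : ℝ) * β + α * β = (m : ℝ) * (α + β) + α * β := by ring
        rw [this, hsum, hprod]; ring
      have h3 : (m : ℝ) * ((m : ℝ) - 1) * 0 - (m : ℝ) * 1 * 2 - 0 * 0 * 0 + 0 * 1 * ((m : ℝ) - 2)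
          + 0 * 0 * 2 - 0 * ((m : ℝ) - 1) * ((m : ℝ) - 2) = (m : ℝ) * α * β := by
        have : (m : ℝ) * α * β = (m : ℝ) * (α * β) := by ring
        rw [this, hprod]; ring
      rw [h1, h2]
      congr 1
      rw [← h3]
    have hroots : (!![(m : ℝ), 0, 0; 0, (m : ℝ) - 1, 1; (m : ℝ) - 2, 2, 0]).charpoly.roots
        = {(m : ℝ), α, β} := by rw [key, roots3]
    have hβα : β ≤ α := by rw [hα, hβ]; linarith
    have hα1 : (1 : ℝ) ≤ α := by rw [hα]; linarith
    have hαm : α < (m : ℝ) := by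
      have : s < (m : ℝ) + 1 := by
        rw [hs, Real.sqrt_lt' (by linarith)]
        nlinarith
      rw [hα]; linarith
    refine ⟨hroots, ?_, hα1, hαm, ?_⟩
    · rw [hroots]
      simp only [Multiset.insert_eq_cons, Multiset.mem_cons, Multiset.mem_singleton]
      tauto
    · intro x hx h1x h2x
      rw [hroots] at hx
      simp only [Multiset.insert_eq_cons, Multiset.mem_cons, Multiset.mem_singleton] at hx
      rcases hx with rfl | rfl | rfl
      · exact absurd h2x (lt_irrefl _)
      · exact le_refl _
      · exact hβα
end
end
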